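/- For Hermite functions φ_k(s) = (k!√(2π))^{-1/2} e^{-s²/4} F_k(s), where F_k(s) = (-1)^k e^{s²/2} (d/ds)^k e^{-s²/2} is the k-th Hermite polynomial, and for any ξ ∈ ℝ and k ∈ ℕ, one has ∫_ℝ φ_k(y+2iξ) φ_k(y-2iξ) dy = e^{2ξ²} Σ_{j=0}^{k} (C(k,j)/j!) (4ξ²)^j. -/

import Mathlib

/-! By the Appell property `F_k(y + a) = ∑ᵢ C(k,i) aⁱ F_{k-i}(y)` (Taylor expansion, using
`F_n' = n F_{n-1}`), the product `φ_k(y + 2iξ) φ_k(y - 2iξ)` is `e^{2ξ²} e^{-y²/2} / (k! √(2π))`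
times a double sum of terms `F_{k-i}(y) F_{k-j}(y)`. Orthogonality of the Hermite polynomials
for the weight `e^{-y²/2}`, obtained by repeated integration by parts, keeps only the diagonal
`i = j`, and there `C(k,i)² (k-i)! = k! C(k,i) / i!`. -/

open Complex MeasureTheory

/-- The `k`-th (probabilists') Hermite polynomial evaluated at a complex number. -/
noncomputable def hermiteC (k : ℕ) (s : ℂ) : ℂ :=
  Polynomial.aeval s (Polynomial.hermite k)

/-- The normalized Hermite function `φ_k(s) = (k!√(2π))^{-1/2} e^{-s²/4} F_k(s)`,
extended to complex arguments as an entire function. -/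
noncomputable def hermiteFun (k : ℕ) (s : ℂ) : ℂ :=
  ((k.factorial : ℂ) * (Real.sqrt (2 * Real.pi) : ℂ)) ^ (-(1 : ℂ) / 2) *
    Complex.exp (-s ^ 2 / 4) * hermiteC k s

namespace Polynomial

theorem derivative_hermite_succ (n : ℕ) :
    derivative (hermite (n + 1)) = (n + 1 : ℤ[X]) * hermite n := by
  induction n with
  | zero => simp
  | succ n ih =>
    rw [hermite_succ (n + 1), derivative_sub, derivative_mul, derivative_X, ih, derivative_mul,
      hermite_succ n]
    simp only [derivative_add, derivative_natCast, derivative_one]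
    push_cast
    ring

theorem derivative_hermite (n : ℕ) :
    derivative (hermite n) = (n : ℤ[X]) * hermite (n - 1) := by
  cases n with
  | zero => simp
  | succ n => simpa using derivative_hermite_succ n

theorem iterate_derivative_hermite (m n : ℕ) :
    derivative^[m] (hermite n) = (n.descFactorial m : ℤ[X]) * hermite (n - m) := by
  induction m with
  | zero => simp
  | succ m ih =>
    rw [Function.iterate_succ_apply', ih, derivative_mul, derivative_natCast, zero_mul, zero_add,
      derivative_hermite, Nat.descFactorial_succ, Nat.sub_sub]
    push_cast
    ring

theorem hasseDeriv_hermite (i n : ℕ) :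
    hasseDeriv i (hermite n) = (n.choose i : ℤ[X]) * hermite (n - i) := by
  have h := congrFun (factorial_smul_hasseDeriv (R := ℤ) (k := i)) (hermite n)
  simp only [LinearMap.smul_apply, iterate_derivative_hermite,
    Nat.descFactorial_eq_factorial_mul_choose] at h
  refine smul_right_injective ℤ[X] (Nat.factorial_ne_zero i) ?_
  simp only [h, nsmul_eq_mul]
  push_cast
  ring

theorem hasseDeriv_map {R S : Type*} [Semiring R] [Semiring S] (f : R →+* S) (k : ℕ)
    (p : R[X]) : hasseDeriv k (p.map f) = (hasseDeriv k p).map f := by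
  ext n
  simp [hasseDeriv_coeff]

theorem aeval_add_hermite {A : Type*} [CommRing A] (k : ℕ) (x a : A) :
    aeval (x + a) (hermite k) =
      ∑ i ∈ Finset.range (k + 1), (k.choose i * a ^ i) * aeval x (hermite (k - i)) := by
  set p := (hermite k).map (algebraMap ℤ A)
  have hdeg : (taylor x p).natDegree < k + 1 := by
    rw [natDegree_taylor]
    exact Nat.lt_succ_of_le (natDegree_map_le.trans natDegree_hermite.le)
  rw [aeval_def, eval₂_eq_eval_map, add_comm, ← taylor_eval, eval_eq_sum_range' hdeg]
  refine Finset.sum_congr rfl fun i _ => ?_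
  simp [p, taylor_coeff, hasseDeriv_map, hasseDeriv_hermite, aeval_def, eval₂_eq_eval_map]
  ring

end Polynomial

open Polynomial

theorem integrable_exp_neg_mul_sq_mul_aeval {R : Type*} [CommRing R] [Algebra R ℝ] {b : ℝ}
    (hb : 0 < b) (p : R[X]) : Integrable fun y : ℝ => Real.exp (-b * y ^ 2) * aeval y p := by
  induction p using Polynomial.induction_on' with
  | add p q hp hq =>
    refine (hp.add hq).congr (ae_of_all _ fun y => ?_)
    simp [mul_add]
  | monomial n a =>
    have hn : (-1 : ℝ) < n := by linarith [n.cast_nonneg (α := ℝ)]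
    refine ((integrable_rpow_mul_exp_neg_mul_sq hb hn).const_mul (algebraMap R ℝ a)).congr
      (ae_of_all _ fun y => ?_)
    simp only [aeval_monomial, Real.rpow_natCast]
    ring

noncomputable def gaussianWeight (y : ℝ) : ℝ := Real.exp (-2⁻¹ * y ^ 2)

theorem integral_gaussianWeight : ∫ y : ℝ, gaussianWeight y = √(2 * Real.pi) := by
  unfold gaussianWeight
  rw [integral_gaussian, div_inv_eq_mul, mul_comm]

section GaussianWeight

variable {R : Type*} [CommRing R] [Algebra R ℝ]

theorem integrable_gaussianWeight_mul_aeval_mul_aeval {S : Type*} [CommRing S] [Algebra S ℝ]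
    (p : R[X]) (q : S[X]) :
    Integrable fun y : ℝ => gaussianWeight y * aeval y p * aeval y q := by
  have h := integrable_exp_neg_mul_sq_mul_aeval (b := 2⁻¹) (by norm_num)
    (p.map (algebraMap R ℝ) * q.map (algebraMap S ℝ))
  simpa only [map_mul, aeval_map_algebraMap, mul_assoc, gaussianWeight] using h

theorem hasDerivAt_gaussianWeight_mul_hermite (n : ℕ) (y : ℝ) :
    HasDerivAt (fun y : ℝ => gaussianWeight y * aeval y (hermite n))
      (-(gaussianWeight y * aeval y (hermite (n + 1)))) y := by
  have hw : HasDerivAt gaussianWeight (gaussianWeight y * -y) y := by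
    unfold gaussianWeight
    convert ((hasDerivAt_pow 2 y).const_mul (-2⁻¹ : ℝ)).exp using 1
    norm_num
    ring
  refine (hw.mul ((hermite n).hasDerivAt_aeval y)).congr_deriv ?_
  rw [hermite_succ]
  simp only [map_sub, map_mul, aeval_X]
  ring

theorem integral_gaussianWeight_mul_hermite_succ_mul (n : ℕ) (q : R[X]) :
    ∫ y : ℝ, gaussianWeight y * aeval y (hermite (n + 1)) * aeval y q =
      ∫ y : ℝ, gaussianWeight y * aeval y (hermite n) * aeval y (derivative q) := by
  have hint := integrable_gaussianWeight_mul_aeval_mul_aeval (hermite (n + 1)) q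
  have h := integral_mul_deriv_eq_deriv_mul_of_integrable
    (fun y _ => hasDerivAt_gaussianWeight_mul_hermite n y) (fun y _ => q.hasDerivAt_aeval y)
    (integrable_gaussianWeight_mul_aeval_mul_aeval _ _)
    (hint.neg.congr (ae_of_all _ fun y => by simp))
    (integrable_gaussianWeight_mul_aeval_mul_aeval _ _)
  simp only [neg_mul, integral_neg, neg_neg] at h
  exact h.symm

theorem integral_gaussianWeight_mul_hermite_mul (n : ℕ) (q : R[X]) :
    ∫ y : ℝ, gaussianWeight y * aeval y (hermite n) * aeval y q =
      ∫ y : ℝ, gaussianWeight y * aeval y (derivative^[n] q) := by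
  induction n generalizing q with
  | zero => simp
  | succ n ih =>
    rw [integral_gaussianWeight_mul_hermite_succ_mul, ih, Function.iterate_succ_apply]

end GaussianWeight

theorem integral_gaussianWeight_mul_hermite (n : ℕ) :
    ∫ y : ℝ, gaussianWeight y * aeval y (hermite n) = if n = 0 then √(2 * Real.pi) else 0 := by
  cases n with
  | zero => simp [integral_gaussianWeight]
  | succ n => simpa using integral_gaussianWeight_mul_hermite_mul (n + 1) (1 : ℝ[X])

theorem integral_gaussianWeight_mul_hermite_mul_hermite (m n : ℕ) :
    ∫ y : ℝ, gaussianWeight y * aeval y (hermite m) * aeval y (hermite n) =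
      if m = n then n.factorial * √(2 * Real.pi) else 0 := by
  simp only [integral_gaussianWeight_mul_hermite_mul, iterate_derivative_hermite, map_mul,
    map_natCast, mul_left_comm _ (n.descFactorial m : ℝ), integral_const_mul,
    integral_gaussianWeight_mul_hermite]
  rcases lt_trichotomy m n with h | rfl | h
  · simp [h.ne, Nat.sub_ne_zero_of_lt h]
  · simp [Nat.descFactorial_self]
  · simp [h.ne', Nat.descFactorial_eq_zero_iff_lt.mpr h]

theorem Nat.choose_mul_choose_mul_factorial_sub {K : Type*} [Field K] [CharZero K] {k i : ℕ}
    (h : i ≤ k) :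
    (k.choose i : K) * k.choose i * (k - i).factorial =
      k.factorial * (k.choose i / i.factorial) := by
  have hi : (i.factorial : K) ≠ 0 := Nat.cast_ne_zero.mpr i.factorial_ne_zero
  rw [← Nat.choose_mul_factorial_mul_factorial h]
  push_cast
  field_simp

theorem integral_gaussianWeight_mul_sum_hermite_mul_sum_hermite {ι : Type*} [DecidableEq ι]
    (s : Finset ι) (σ : ι → ℕ) (hσ : Set.InjOn σ s) (c d : ι → ℂ) :
    ∫ y : ℝ, (gaussianWeight y : ℂ) * (∑ i ∈ s, c i * aeval (y : ℂ) (hermite (σ i))) *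
        (∑ j ∈ s, d j * aeval (y : ℂ) (hermite (σ j))) =
      √(2 * Real.pi) * ∑ i ∈ s, c i * d i * (σ i).factorial := by
  set G : ℕ → ℕ → ℝ → ℝ := fun m n y =>
    gaussianWeight y * aeval y (hermite m) * aeval y (hermite n)
  have hG : ∀ m n, Integrable fun y => (G m n y : ℂ) := fun m n =>
    (integrable_gaussianWeight_mul_aeval_mul_aeval (hermite m) (hermite n)).ofReal
  have hexpand : ∀ y : ℝ,
      (gaussianWeight y : ℂ) * (∑ i ∈ s, c i * aeval (y : ℂ) (hermite (σ i))) *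
          (∑ j ∈ s, d j * aeval (y : ℂ) (hermite (σ j))) =
        ∑ i ∈ s, ∑ j ∈ s, c i * d j * (G (σ i) (σ j) y : ℂ) := by
    intro y
    have hreal : ∀ n, aeval (y : ℂ) (hermite n) = (aeval y (hermite n) : ℂ) := fun n => by
      rw [← Complex.coe_algebraMap, aeval_algebraMap_apply]
    rw [mul_assoc, Finset.sum_mul_sum, Finset.mul_sum]
    refine Finset.sum_congr rfl fun i _ => ?_
    rw [Finset.mul_sum]
    refine Finset.sum_congr rfl fun j _ => ?_
    simp only [G, hreal]
    push_cast
    ring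
  have horth : ∀ i ∈ s, ∀ j ∈ s, ((∫ y, G (σ i) (σ j) y : ℝ) : ℂ) =
      if i = j then (√(2 * Real.pi) * (σ i).factorial : ℂ) else 0 := by
    intro i hi j hj
    simp only [G, integral_gaussianWeight_mul_hermite_mul_hermite]
    by_cases h : i = j
    · subst h
      simp [mul_comm]
    · rw [if_neg (mt (hσ hi hj) h), if_neg h, ofReal_zero]
  simp_rw [hexpand]
  rw [integral_finsetSum _ fun i _ => integrable_finsetSum _ fun j _ => (hG _ _).const_mul _,
    Finset.mul_sum]
  refine Finset.sum_congr rfl fun i hi => ?_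
  rw [integral_finsetSum _ fun j _ => (hG _ _).const_mul _]
  simp_rw [integral_const_mul, integral_complex_ofReal]
  rw [Finset.sum_congr rfl fun j hj => by rw [horth i hi j hj]]
  simp only [mul_ite, mul_zero, Finset.sum_ite_eq, if_pos hi]
  ring

theorem integral_gaussianWeight_mul_hermite_add_mul_hermite_add (k : ℕ) (a b : ℂ) :
    ∫ y : ℝ, (gaussianWeight y : ℂ) * aeval (y + a : ℂ) (hermite k) *
        aeval (y + b : ℂ) (hermite k) =
      k.factorial * √(2 * Real.pi) *
        ∑ j ∈ Finset.range (k + 1), (k.choose j / j.factorial : ℂ) * (a * b) ^ j := by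
  have hinj : Set.InjOn (k - ·) (Finset.range (k + 1) : Set ℕ) := fun i hi j hj h => by
    simp only [Finset.coe_range, Set.mem_Iio] at hi hj h
    omega
  simp_rw [aeval_add_hermite]
  rw [integral_gaussianWeight_mul_sum_hermite_mul_sum_hermite _ _ hinj, mul_comm (k.factorial : ℂ),
    mul_assoc]
  congr 1
  rw [Finset.mul_sum]
  refine Finset.sum_congr rfl fun i hi => ?_
  have h := Nat.choose_mul_choose_mul_factorial_sub (K := ℂ)
    (Nat.lt_succ_iff.mp (Finset.mem_range.mp hi))
  linear_combination (a * b) ^ i * h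

theorem factorial_mul_sqrt_two_pi_ne_zero (k : ℕ) : (k.factorial : ℂ) * √(2 * Real.pi) ≠ 0 := by
  have : (0 : ℝ) < √(2 * Real.pi) := by positivity
  exact mul_ne_zero (by exact_mod_cast k.factorial_ne_zero) (by exact_mod_cast this.ne')

theorem hermiteFun_mul_hermiteFun (k : ℕ) (y : ℝ) (a : ℂ) :
    hermiteFun k (y + a) * hermiteFun k (y - a) =
      ((k.factorial : ℂ) * √(2 * Real.pi))⁻¹ * cexp (-a ^ 2 / 2) *
        (gaussianWeight y * aeval (y + a : ℂ) (hermite k) * aeval (y - a : ℂ) (hermite k)) := by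
  set r : ℂ := (k.factorial : ℂ) * √(2 * Real.pi)
  have hnorm : r ^ (-(1 : ℂ) / 2) * r ^ (-(1 : ℂ) / 2) = r⁻¹ := by
    rw [← cpow_add _ _ (factorial_mul_sqrt_two_pi_ne_zero k),
      show -(1 : ℂ) / 2 + -(1 : ℂ) / 2 = -1 by ring, cpow_neg_one]
  have hexp : cexp (-(y + a) ^ 2 / 4) * cexp (-(y - a) ^ 2 / 4) =
      cexp (-a ^ 2 / 2) * gaussianWeight y := by
    rw [gaussianWeight, ofReal_exp, ← Complex.exp_add, ← Complex.exp_add]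
    push_cast
    ring_nf
  calc hermiteFun k (y + a) * hermiteFun k (y - a)
      = (r ^ (-(1 : ℂ) / 2) * r ^ (-(1 : ℂ) / 2)) *
          (cexp (-(y + a) ^ 2 / 4) * cexp (-(y - a) ^ 2 / 4)) *
          (aeval (y + a : ℂ) (hermite k) * aeval (y - a : ℂ) (hermite k)) := by
        simp only [hermiteFun, hermiteC]; ring
    _ = _ := by rw [hnorm, hexp]; ring

/-- For any `ξ ∈ ℝ` and `k ∈ ℕ`,
`∫_ℝ φ_k(y+2iξ) φ_k(y-2iξ) dy = e^{2ξ²} Σ_{j=0}^{k} (C(k,j)/j!) (4ξ²)^j`. -/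
theorem hermite_shifted_norm (k : ℕ) (ξ : ℝ) :
    ∫ y : ℝ, hermiteFun k (y + 2 * I * ξ) * hermiteFun k (y - 2 * I * ξ) =
      (Real.exp (2 * ξ ^ 2) : ℂ) *
        ∑ j ∈ Finset.range (k + 1),
          ((k.choose j : ℂ) / (j.factorial : ℂ)) * (4 * (ξ : ℂ) ^ 2) ^ j := by
  have hprod : 2 * I * ξ * -(2 * I * ξ) = 4 * (ξ : ℂ) ^ 2 := by
    linear_combination (-4 * (ξ : ℂ) ^ 2) * I_sq
  have hexp : cexp (-(2 * I * ξ) ^ 2 / 2) = Real.exp (2 * ξ ^ 2) := by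
    rw [ofReal_exp]
    congr 1
    push_cast
    linear_combination (-2 * (ξ : ℂ) ^ 2) * I_sq
  simp_rw [hermiteFun_mul_hermiteFun, sub_eq_add_neg]
  rw [integral_const_mul, integral_gaussianWeight_mul_hermite_add_mul_hermite_add, hprod, hexp,
    mul_mul_mul_comm, inv_mul_cancel₀ (factorial_mul_sqrt_two_pi_ne_zero k), one_mul]
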